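/- For every k ≥ 1, the spanning tree discrepancy of the graph P₂ □ Pₖ (the 2 × k grid) satisfies 𝒟(P₂ □ Pₖ, 𝒯₂ₖ) ≤ 3; that is, there exists a labeling f : E(P₂ □ Pₖ) → {−1, +1} such that every spanning tree T of P₂ □ Pₖ satisfies |f(T)| ≤ 3. -/

import Mathlib

open SimpleGraph Finset

/-- The sum of the labels `f` over a set `E` of edges (of a finite vertex type). -/
noncomputable def edgeLabelSum {V : Type*} [Fintype V] [DecidableEq V]
    (f : Sym2 V → ℤ) (E : Set (Sym2 V)) : ℤ :=
  ∑ e : Sym2 V, E.indicator f e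

/-!
Label `+1` the edges lying inside the left `⌈k/2⌉` columns and `-1` all other edges. A spanning
tree `T` has `2k - 1` edges, so `f(T) = 2p - (2k - 1)` where `p` counts its edges inside the left
block. Being a forest on each side of the column cut, `T` has `p ≤ 2⌈k/2⌉ - 1` and at most
`(2k - 2⌈k/2⌉ - 1) + 2` further edges, the `2` accounting for the two grid edges crossing the cut.
Hence `-3 ≤ f(T) ≤ 1`.
-/

namespace SimpleGraph

section Forest

variable {V : Type*} [Fintype V]

theorem IsAcyclic.card_edgeFinset_le {G : SimpleGraph V} [Fintype G.edgeSet]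
    (hG : G.IsAcyclic) : #G.edgeFinset ≤ Fintype.card V - 1 := by
  cases isEmpty_or_nonempty V
  · simp [Subsingleton.elim G ⊥]
  obtain ⟨T, hGT, -, hT⟩ := connected_top.exists_isTree_le_of_le_of_isAcyclic le_top hG
  classical
  rw [← hT.card_edgeFinset, Nat.add_sub_cancel]
  exact card_le_card (edgeFinset_mono hGT)

variable [DecidableEq V]

theorem IsAcyclic.card_edgeFinset_inter_sym2_le {G : SimpleGraph V} [DecidableRel G.Adj]
    (hG : G.IsAcyclic) (s : Finset V) : #(G.edgeFinset ∩ s.sym2) ≤ #s - 1 := by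
  rw [← filter_edgeFinset_toFinset_subset, card_filter_edgeFinset_toFinset_subset]
  simpa using (hG.induce s).card_edgeFinset_le

def cutEdgeFinset (G : SimpleGraph V) [Fintype G.edgeSet] (s : Finset V) : Finset (Sym2 V) :=
  G.edgeFinset \ (s.sym2 ∪ sᶜ.sym2)

theorem cutEdgeFinset_mono {G H : SimpleGraph V} [Fintype G.edgeSet] [Fintype H.edgeSet]
    (h : G ≤ H) (s : Finset V) : G.cutEdgeFinset s ⊆ H.cutEdgeFinset s :=
  sdiff_subset_sdiff (edgeFinset_mono h) le_rfl

theorem IsAcyclic.card_edgeFinset_sdiff_sym2_le {G : SimpleGraph V} [DecidableRel G.Adj]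
    (hG : G.IsAcyclic) (s : Finset V) :
    #(G.edgeFinset \ s.sym2) ≤ #sᶜ - 1 + #(G.cutEdgeFinset s) :=
  calc #(G.edgeFinset \ s.sym2)
      ≤ #((G.edgeFinset ∩ sᶜ.sym2) ∪ G.cutEdgeFinset s) := by
        refine card_le_card fun e he => ?_
        simp only [cutEdgeFinset, mem_union, mem_inter, mem_sdiff] at he ⊢
        tauto
    _ ≤ #sᶜ - 1 + #(G.cutEdgeFinset s) :=
        (card_union_le _ _).trans (by grw [hG.card_edgeFinset_inter_sym2_le])

end Forest

section BoxProd

variable {α β : Type*} [Fintype α] [DecidableEq α] [Fintype β] [DecidableEq β]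
  {G : SimpleGraph α} {H : SimpleGraph β} [Fintype H.edgeSet] [Fintype (G □ H).edgeSet]

theorem cutEdgeFinset_boxProd_subset (t : Finset β) :
    (G □ H).cutEdgeFinset (univ ×ˢ t)
      ⊆ (univ ×ˢ H.cutEdgeFinset t).image fun p => p.2.map (p.1, ·) := by
  intro e he
  induction e using Sym2.ind with | h x y => ?_
  obtain ⟨a, i⟩ := x
  obtain ⟨b, j⟩ := y
  simp only [cutEdgeFinset, mem_sdiff, mem_union, mem_edgeFinset, mem_edgeSet, boxProd_adj,
    Finset.mk_mem_sym2_iff, mem_compl, mem_product, mem_univ, true_and] at he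
  obtain ⟨⟨-, rfl⟩ | ⟨hH, rfl⟩, hcut⟩ := he
  · tauto
  · refine mem_image.2 ⟨(a, s(i, j)), ?_, by simp⟩
    simp only [cutEdgeFinset, mem_product, mem_univ, true_and, mem_sdiff, mem_union,
      mem_edgeFinset, mem_edgeSet, Finset.mk_mem_sym2_iff, mem_compl]
    exact ⟨hH, hcut⟩

theorem card_cutEdgeFinset_boxProd_le (t : Finset β) :
    #((G □ H).cutEdgeFinset (univ ×ˢ t)) ≤ Fintype.card α * #(H.cutEdgeFinset t) :=
  (card_le_card (cutEdgeFinset_boxProd_subset t)).trans <| card_image_le.trans (by simp)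

end BoxProd

theorem card_cutEdgeFinset_pathGraph_le_one (k m : ℕ) [Fintype (pathGraph k).edgeSet] :
    #((pathGraph k).cutEdgeFinset {j | (j : ℕ) < m}) ≤ 1 := by
  have mem_cut : ∀ e ∈ (pathGraph k).cutEdgeFinset {j | (j : ℕ) < m},
      ∃ x y : Fin k, e = s(x, y) ∧ (x : ℕ) + 1 = m ∧ (y : ℕ) = m := by
    intro e he
    induction e using Sym2.ind with | h x y => ?_
    simp only [cutEdgeFinset, mem_sdiff, mem_union, mem_edgeFinset, mem_edgeSet, pathGraph_adj,
      Finset.mk_mem_sym2_iff, mem_compl, mem_filter, mem_univ, true_and] at he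
    rcases he with ⟨hxy | hxy, hcut⟩
    · exact ⟨x, y, rfl, by omega, by omega⟩
    · exact ⟨y, x, Sym2.eq_swap, by omega, by omega⟩
  refine card_le_one.2 fun e he e' he' => ?_
  obtain ⟨x, y, rfl, hx, hy⟩ := mem_cut e he
  obtain ⟨x', y', rfl, hx', hy'⟩ := mem_cut e' he'
  rw [Fin.ext (show (x : ℕ) = x' by omega), Fin.ext (show (y : ℕ) = y' by omega)]

end SimpleGraph

section Labeling

variable {V : Type*} [Fintype V] [DecidableEq V]

def insideLabel (s : Finset V) (e : Sym2 V) : ℤ :=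
  if e ∈ s.sym2 then 1 else -1

theorem edgeLabelSum_edgeSet (f : Sym2 V → ℤ) (G : SimpleGraph V) [Fintype G.edgeSet] :
    edgeLabelSum f G.edgeSet = ∑ e ∈ G.edgeFinset, f e := by
  rw [edgeLabelSum, ← coe_edgeFinset, sum_indicator_subset _ (subset_univ _)]

theorem edgeLabelSum_insideLabel (s : Finset V) (G : SimpleGraph V) [Fintype G.edgeSet] :
    edgeLabelSum (insideLabel s) G.edgeSet
      = #(G.edgeFinset ∩ s.sym2) - #(G.edgeFinset \ s.sym2) := by
  simp only [edgeLabelSum_edgeSet, insideLabel]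
  rw [sum_ite, sum_const, sum_const, filter_mem_eq_inter, filter_not, filter_mem_eq_inter]
  simp [sub_eq_add_neg]

end Labeling

theorem two_by_k_grid_spanning_tree_discrepancy_upper_general (k : ℕ) :
    ∃ f : Sym2 (Fin 2 × Fin k) → ℤ,
      (∀ e ∈ (pathGraph 2 □ pathGraph k).edgeSet, f e = 1 ∨ f e = -1) ∧
      ∀ T : SimpleGraph (Fin 2 × Fin k), T ≤ (pathGraph 2 □ pathGraph k) → T.IsTree →
        |edgeLabelSum f T.edgeSet| ≤ 3 := by
  classical
  set leftCols : Finset (Fin k) := {j | (j : ℕ) < (k + 1) / 2}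
  set s : Finset (Fin 2 × Fin k) := univ ×ˢ leftCols
  refine ⟨insideLabel s, fun e _ => ?_, fun T hTG hT => ?_⟩
  · unfold insideLabel
    split_ifs <;> simp
  have hcut : #(T.cutEdgeFinset s) ≤ 2 := calc
    _ ≤ #((pathGraph 2 □ pathGraph k).cutEdgeFinset s) := card_le_card (cutEdgeFinset_mono hTG s)
    _ ≤ 2 * 1 := (card_cutEdgeFinset_boxProd_le leftCols).trans <| by
      simpa using card_cutEdgeFinset_pathGraph_le_one k ((k + 1) / 2)
  have hs : #s = 2 * ((k + 1) / 2) := by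
    simp only [s, leftCols, card_product, card_univ, Fintype.card_fin, Fin.card_filter_val_lt]
    omega
  have hsc : #sᶜ = 2 * k - #s := by simp [card_compl]
  have hedges := hT.card_edgeFinset
  have hsplit := card_inter_add_card_sdiff T.edgeFinset s.sym2
  have hin := hT.isAcyclic.card_edgeFinset_inter_sym2_le s
  have hout := hT.isAcyclic.card_edgeFinset_sdiff_sym2_le s
  simp only [Fintype.card_prod, Fintype.card_fin] at hedges
  rw [edgeLabelSum_insideLabel, abs_le]
  omega

/-- For every `k ≥ 1`, the spanning-tree discrepancy of the `2 × k` grid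
`P₂ □ Pₖ` is at most `3`: there is a `±1`-labeling `f` of its edges such that every spanning
tree `T` satisfies `|f(T)| ≤ 3`. -/
theorem two_by_k_grid_spanning_tree_discrepancy_upper (k : ℕ) (hk : 1 ≤ k) :
    ∃ f : Sym2 (Fin 2 × Fin k) → ℤ,
      (∀ e ∈ (pathGraph 2 □ pathGraph k).edgeSet, f e = 1 ∨ f e = -1) ∧
      ∀ T : SimpleGraph (Fin 2 × Fin k), T ≤ (pathGraph 2 □ pathGraph k) → T.IsTree →
        |edgeLabelSum f T.edgeSet| ≤ 3 :=
  two_by_k_grid_spanning_tree_discrepancy_upper_general k
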